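/- Cay(ℤ, {±1, ±3, ±5}) admits a decomposition into 3 edge-disjoint two-way-infinite Hamilton paths. -/

import Mathlib

/-- Infinite circulant graph on ℤ: `u ~ v` iff `u - v ∈ S` or `v - u ∈ S`. -/
def cay (S : Set ℤ) : SimpleGraph ℤ where
  Adj u v := u ≠ v ∧ (u - v ∈ S ∨ v - u ∈ S)
  symm := by
    constructor
    intro u v h
    exact ⟨h.1.symm, h.2.symm⟩
  loopless := by
    constructor
    intro v h
    exact h.1 rfl

/-- `H` is a two-way-infinite Hamilton path of `G`: a connected spanning subgraph
in which every vertex has degree 2. -/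
def IsHamPath (G H : SimpleGraph ℤ) : Prop :=
  H ≤ G ∧ H.Connected ∧ ∀ v : ℤ, (H.neighborSet v).ncard = 2

/-- `G` decomposes into `k` edge-disjoint two-way-infinite Hamilton paths. -/
def HamDecomp (G : SimpleGraph ℤ) (k : ℕ) : Prop :=
  ∃ D : Fin k → SimpleGraph ℤ,
    (∀ i, IsHamPath G (D i)) ∧
    (∀ i j, i ≠ j → Disjoint (D i).edgeSet (D j).edgeSet) ∧
    ∀ e ∈ G.edgeSet, ∃ i, e ∈ (D i).edgeSet

/-!
The edges of difference `1` form the path `hasse ℤ`. Every other edge has difference `3` or `5`;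
sorting these by the parity of their smaller endpoint `u`, the edges `{u, u + 3}`, `{u, u + 5}`
with `u ≡ c [ZMOD 2]` are exactly the edges of the zigzag path `…, c, c + 5, c + 2, c + 7, c + 4, …`,
whose steps alternate between `+5` and `-3`.
-/

open SimpleGraph

lemma hasse_int_adj {a b : ℤ} : (hasse ℤ).Adj a b ↔ b = a + 1 ∨ a = b + 1 := by
  simp only [hasse_adj, Order.covBy_iff_add_one_eq]
  omega

lemma hasse_int_neighborSet (v : ℤ) : (hasse ℤ).neighborSet v = {v - 1, v + 1} := by
  ext u
  simp only [mem_neighborSet, hasse_int_adj, Set.mem_insert_iff, Set.mem_singleton_iff]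
  omega

lemma hasse_int_connected : (hasse ℤ).Connected :=
  ⟨hasse_preconnected_of_succ ℤ⟩

lemma isHamPath_of_iso {G H : SimpleGraph ℤ} (e : H ≃g hasse ℤ) (hle : H ≤ G) :
    IsHamPath G H := by
  refine ⟨hle, e.connected_iff.mpr hasse_int_connected, fun v => ?_⟩
  rw [Set.ncard_congr' (e.mapNeighborSet v), hasse_int_neighborSet]
  exact Set.ncard_pair (by omega)

lemma hamDecomp_three {G H₀ H₁ H₂ : SimpleGraph ℤ}
    (h₀ : IsHamPath G H₀) (h₁ : IsHamPath G H₁) (h₂ : IsHamPath G H₂)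
    (h₀₁ : Disjoint H₀ H₁) (h₀₂ : Disjoint H₀ H₂) (h₁₂ : Disjoint H₁ H₂)
    (hcover : G ≤ H₀ ⊔ H₁ ⊔ H₂) : HamDecomp G 3 := by
  refine ⟨![H₀, H₁, H₂], fun i => by fin_cases i <;> assumption, fun i j hij => ?_, fun e he => ?_⟩
  · rw [disjoint_edgeSet]
    fin_cases i <;> fin_cases j
    all_goals first | exact absurd rfl hij | assumption | exact Disjoint.symm ‹_›
  · simp only [← edgeSet_subset_edgeSet, edgeSet_sup] at hcover
    rcases hcover he with (he | he) | he
    exacts [⟨0, he⟩, ⟨1, he⟩, ⟨2, he⟩]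

/-- Takes `0, 1, 2, 3, 4, …` to `c, c + 5, c + 2, c + 7, c + 4, …`. -/
def zigzag (c : ℤ) : ℤ ≃ ℤ where
  toFun n := n + c + 4 * (n % 2)
  invFun m := m - c - 4 * ((m - c) % 2)
  left_inv n := by dsimp only; omega
  right_inv m := by dsimp only; omega

noncomputable def zigzagPath (c : ℤ) : SimpleGraph ℤ :=
  (hasse ℤ).map (zigzag c)

lemma zigzagPath_adj {c u v : ℤ} : (zigzagPath c).Adj u v ↔
    (u - c) % 2 = 0 ∧ (v - u = 3 ∨ v - u = 5) ∨ (v - c) % 2 = 0 ∧ (u - v = 3 ∨ u - v = 5) := by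
  rw [zigzagPath, ← (Iso.map (zigzag c) (hasse ℤ)).symm.map_adj_iff, Iso.map_symm_apply,
    Iso.map_symm_apply, hasse_int_adj]
  simp only [zigzag, Equiv.coe_fn_symm_mk]
  omega

lemma cay_one_three_five_adj {u v : ℤ} : (cay {1, 3, 5}).Adj u v ↔
    u - v = 1 ∨ u - v = 3 ∨ u - v = 5 ∨ v - u = 1 ∨ v - u = 3 ∨ v - u = 5 := by
  simp only [cay, Set.mem_insert_iff, Set.mem_singleton_iff]
  omega

lemma hasse_int_le_cay : hasse ℤ ≤ cay {1, 3, 5} := fun u v => by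
  rw [hasse_int_adj, cay_one_three_five_adj]
  omega

lemma zigzagPath_le_cay (c : ℤ) : zigzagPath c ≤ cay {1, 3, 5} := fun u v => by
  rw [zigzagPath_adj, cay_one_three_five_adj]
  omega

lemma disjoint_hasse_int_zigzagPath (c : ℤ) : Disjoint (hasse ℤ) (zigzagPath c) := by
  rw [disjoint_left]
  intro u v
  rw [hasse_int_adj, zigzagPath_adj]
  omega

lemma disjoint_zigzagPath_add_one (c : ℤ) : Disjoint (zigzagPath c) (zigzagPath (c + 1)) := by
  rw [disjoint_left]
  intro u v
  rw [zigzagPath_adj, zigzagPath_adj]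
  omega

lemma cay_le_hasse_int_sup_zigzagPath :
    cay {1, 3, 5} ≤ hasse ℤ ⊔ zigzagPath 0 ⊔ zigzagPath 1 := fun u v => by
  rw [sup_adj, sup_adj, cay_one_three_five_adj, hasse_int_adj, zigzagPath_adj, zigzagPath_adj]
  omega

theorem stmt19 : HamDecomp (cay ({1, 3, 5} : Set ℤ)) 3 :=
  hamDecomp_three
    (isHamPath_of_iso Iso.refl hasse_int_le_cay)
    (isHamPath_of_iso (Iso.map (zigzag 0) (hasse ℤ)).symm (zigzagPath_le_cay 0))
    (isHamPath_of_iso (Iso.map (zigzag 1) (hasse ℤ)).symm (zigzagPath_le_cay 1))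
    (disjoint_hasse_int_zigzagPath 0) (disjoint_hasse_int_zigzagPath 1)
    (disjoint_zigzagPath_add_one 0)
    cay_le_hasse_int_sup_zigzagPath
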